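/- arXiv:1811.09161 — 5 statements merged into one kernel-verified Lean document; each statement's English description precedes it below -/
import Mathlib

section
/- Let K ≥ 1, let v_1 < v_2 < ... < v_K be positive real velocities with v_K = max_k v_k, and extend symmetrically by v_{-k} = -v_k; let ω_k > 0 (k = ±1,...,±K) be symmetric quadrature weights with ∑_k ω_k = 1, and let Γ = diag(ω_k |v_k|). Let Δx > 0 and Δt > 0, and for each interface index j let S_{j-1/2} be a (2K)×(2K) real matrix with nonnegative entries. Consider the one-step well-balanced update: for every j ∈ ℤ and each k with v_k > 0, f_j^{n+1}(v_k) = (1 - |v_k| Δt/Δx) f_j^n(v_k) + |v_k| (Δt/Δx) (S_{j-1/2} (f_{j-1}^n(v_1),...,f_{j-1}^n(v_K), f_j^n(-v_1),...,f_j^n(-v_K)))_k, and for each k with v_k < 0, f_{j-1}^{n+1}(v_k) is given by the corresponding component of the same expression. If (i) the CFL condition max_k |v_k| · Δt ≤ Δx holds, and (ii) for every j the matrix Γ S_{j-1/2} Γ^{-1} is left-stochastic (nonnegative entries, each column summing to 1), then: (a) if all f_j^n(v_k) ≥ 0 then all f_j^{n+1}(v_k) ≥ 0; and (b) if the data are summable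 over j, the total discrete mass is conserved: ∑_{j∈ℤ} ∑_{k} ω_k f_j^{n+1}(v_k) = ∑_{j∈ℤ} ∑_{k} ω_k f_j^n(v_k). -/
open Matrix Finset

/-- A square real matrix is *left-stochastic* if all its entries are nonnegative
and every column sums to `1`. -/
def LeftStochastic {n : Type*} [Fintype n] (M : Matrix n n ℝ) : Prop :=
  (∀ i j, 0 ≤ M i j) ∧ ∀ j, ∑ i, M i j = 1

/-!
Write `Γ = diag γ` with `γ_k = ω_k |v_k|`. Multiplying the update by `ω_k`, the mass of cell `j`
changes by `Δt/Δx` times the weighted outgoing interface flux `Γ S g` minus the weighted cell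
values `Γ f`. Since `Γ S Γ⁻¹` is left-stochastic, `∑ Γ S g = ∑ Γ g`, and `g` is just `f`
regrouped by interfaces, so after a shift of summation index the two contributions cancel.
Positivity holds because, under the CFL condition, each new value is a convex combination
of an old value and a component of `S g ≥ 0`.
-/

section LeftStochastic

variable {n : Type*} [Fintype n] [DecidableEq n]

theorem LeftStochastic.mem_colStochastic {M : Matrix n n ℝ} (hM : LeftStochastic M) :
    M ∈ colStochastic ℝ n :=
  mem_colStochastic_iff_sum.2 hM

theorem LeftStochastic.summable_mulVec {β : Type*} {M : β → Matrix n n ℝ} {x : β → n → ℝ}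
    (hM : ∀ b, LeftStochastic (M b)) (hx : ∀ l, Summable fun b => x b l) (i : n) :
    Summable fun b => (M b *ᵥ x b) i := by
  simp only [mulVec, dotProduct]
  refine summable_sum fun l _ => (hx l).norm.of_norm_bounded fun b => ?_
  rw [norm_mul, Real.norm_of_nonneg ((hM b).1 i l)]
  exact mul_le_of_le_one_left (norm_nonneg _)
    (le_one_of_mem_colStochastic (hM b).mem_colStochastic)

variable {γ : n → ℝ} {S : Matrix n n ℝ}

/-- A zero weight `γ l` would make column `l` of `Γ S Γ⁻¹` vanish. -/
theorem ne_zero_of_leftStochastic_conj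
    (hS : LeftStochastic (diagonal γ * S * diagonal fun i => (γ i)⁻¹)) (l : n) : γ l ≠ 0 := by
  intro hl
  have hcol := hS.2 l
  simp [mul_diagonal, hl] at hcol

theorem mul_mulVec_eq_conj_mulVec (hγ : ∀ l, γ l ≠ 0) (x : n → ℝ) (i : n) :
    γ i * (S *ᵥ x) i
      = ((diagonal γ * S * diagonal fun i => (γ i)⁻¹) *ᵥ fun l => γ l * x l) i := by
  have hcancel : ((diagonal fun i => (γ i)⁻¹) *ᵥ fun l => γ l * x l) = x := by
    ext l
    rw [mulVec_diagonal, inv_mul_cancel_left₀ (hγ l)]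
  rw [← mulVec_mulVec, hcancel, ← mulVec_mulVec, mulVec_diagonal]

theorem sum_mul_mulVec_of_leftStochastic_conj
    (hS : LeftStochastic (diagonal γ * S * diagonal fun i => (γ i)⁻¹)) (x : n → ℝ) :
    ∑ i, γ i * (S *ᵥ x) i = ∑ i, γ i * x i := by
  simp only [mul_mulVec_eq_conj_mulVec (ne_zero_of_leftStochastic_conj hS)]
  exact sum_mulVec_of_mem_colStochastic hS.mem_colStochastic

theorem summable_mulVec_of_leftStochastic_conj {β : Type*} [Nonempty β] {S : β → Matrix n n ℝ}
    {x : β → n → ℝ} (hS : ∀ b, LeftStochastic (diagonal γ * S b * diagonal fun i => (γ i)⁻¹))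
    (hx : ∀ l, Summable fun b => x b l) (i : n) :
    Summable fun b => (S b *ᵥ x b) i := by
  have hγ := ne_zero_of_leftStochastic_conj (hS (Classical.arbitrary β))
  rw [← summable_mul_left_iff (hγ i)]
  simp only [mul_mulVec_eq_conj_mulVec hγ]
  exact LeftStochastic.summable_mulVec hS (fun l => (hx l).mul_left (γ l)) i

end LeftStochastic

theorem hasSum_sum_comp_add {G ι α : Type*} [AddGroup G] [Fintype ι] [AddCommMonoid α]
    [TopologicalSpace α] [ContinuousAdd α] {F : G → ι → α} {a : ι → α}
    (hF : ∀ i, HasSum (F · i) (a i)) (s : ι → G) :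
    HasSum (fun j => ∑ i, F (j + s i) i) (∑ i, a i) :=
  hasSum_sum fun i _ => (Equiv.addRight (s i)).hasSum_iff.2 (hF i)

section UpwindUpdate

/-! An explicit update with speeds `c` and mesh ratio `μ = Δt/Δx`, in which component `i` of cell
`j` is fed by the interface value `flux (j + s i)` (in the scheme `s i = 0` for positive and
`s i = 1` for negative velocities). -/

variable {G ι : Type*} [AddGroup G] {c : ι → ℝ} {μ : ℝ} {s : ι → G} {f fnew flux : G → ι → ℝ}

theorem update_nonneg (hc : ∀ i, 0 ≤ c i * μ) (hcfl : ∀ i, c i * μ ≤ 1)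
    (hf : ∀ j i, 0 ≤ f j i) (hflux : ∀ j i, 0 ≤ flux j i)
    (hupd : ∀ j i, fnew j i = (1 - c i * μ) * f j i + c i * μ * flux (j + s i) i)
    (j : G) (i : ι) : 0 ≤ fnew j i := by
  rw [hupd]
  exact add_nonneg (mul_nonneg (sub_nonneg.2 (hcfl i)) (hf j i)) (mul_nonneg (hc i) (hflux _ i))

theorem hasSum_weighted_update [Fintype ι] {w a b : ι → ℝ}
    (hf : ∀ i, HasSum (f · i) (a i)) (hflux : ∀ i, HasSum (flux · i) (b i))
    (hbal : ∑ i, w i * c i * b i = ∑ i, w i * c i * a i)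
    (hupd : ∀ j i, fnew j i = (1 - c i * μ) * f j i + c i * μ * flux (j + s i) i) :
    HasSum (fun j => ∑ i, w i * fnew j i) (∑ i, w i * a i) := by
  have hcell : ∀ i, HasSum (fun j => w i * fnew j i)
      (w i * ((1 - c i * μ) * a i + c i * μ * b i)) := fun i => by
    simp only [hupd]
    exact (((hf i).mul_left _).add
      (((Equiv.addRight (s i)).hasSum_iff.2 (hflux i)).mul_left (c i * μ))).mul_left (w i)
  convert hasSum_sum fun i _ => hcell i using 1
  have hsplit : ∀ i, w i * ((1 - c i * μ) * a i + c i * μ * b i)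
      = w i * a i + μ * (w i * c i * b i - w i * c i * a i) := fun i => by ring
  simp only [hsplit, sum_add_distrib, ← mul_sum, sum_sub_distrib, hbal, sub_self, mul_zero,
    add_zero]

end UpwindUpdate

/-- `Sum.inl k` stands for the velocity `v k` and `Sum.inr k` for `-v k`. -/
theorem wellBalanced_scheme_positivity_and_mass_conservation_general
    (K : ℕ)
    (v ω : Fin K → ℝ)
    (γ : Fin K ⊕ Fin K → ℝ)
    (hγ : γ = Sum.elim (fun k => ω k * |v k|) (fun k => ω k * |v k|))
    (Δx Δt : ℝ) (hΔx : 0 < Δx) (hΔt : 0 < Δt)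
    (S : ℤ → Matrix (Fin K ⊕ Fin K) (Fin K ⊕ Fin K) ℝ)
    (hSnonneg : ∀ j i l, 0 ≤ S j i l)
    (f fnew g : ℤ → (Fin K ⊕ Fin K) → ℝ)
    -- incoming states at the interface `x_{j-1/2}`
    (hg : ∀ j, g j =
      Sum.elim (fun k => f (j - 1) (Sum.inl k)) (fun k => f j (Sum.inr k)))
    -- update of the positive-velocity components
    (hupdpos : ∀ (j : ℤ) (k : Fin K),
      fnew j (Sum.inl k) =
        (1 - |v k| * Δt / Δx) * f j (Sum.inl k)
          + |v k| * (Δt / Δx) * (S j).mulVec (g j) (Sum.inl k))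
    -- update of the negative-velocity components
    (hupdneg : ∀ (j : ℤ) (k : Fin K),
      fnew (j - 1) (Sum.inr k) =
        (1 - |v k| * Δt / Δx) * f (j - 1) (Sum.inr k)
          + |v k| * (Δt / Δx) * (S j).mulVec (g j) (Sum.inr k))
    -- (i) CFL condition : max_k |v_k| · Δt ≤ Δx
    (hCFL : ∀ k, |v k| * Δt ≤ Δx)
    -- (ii) Γ S_{j-1/2} Γ⁻¹ is left-stochastic
    (hstoch : ∀ j, LeftStochastic
      (Matrix.diagonal γ * S j * Matrix.diagonal fun i => (γ i)⁻¹)) :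
    -- (a) preservation of nonnegativity
    ((∀ j i, 0 ≤ f j i) → ∀ j i, 0 ≤ fnew j i) ∧
    -- (b) conservation of the total discrete mass
    ((∀ i, Summable fun j : ℤ => f j i) →
      ∑' j : ℤ, ∑ i, Sum.elim ω ω i * fnew j i
        = ∑' j : ℤ, ∑ i, Sum.elim ω ω i * f j i) := by
  set c : Fin K ⊕ Fin K → ℝ := Sum.elim (fun k => |v k|) (fun k => |v k|)
  set s : Fin K ⊕ Fin K → ℤ := Sum.elim (fun _ => 0) (fun _ => 1)
  set t : Fin K ⊕ Fin K → ℤ := Sum.elim (fun _ => -1) (fun _ => 0)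
  have hupd : ∀ j i, fnew j i = (1 - c i * (Δt / Δx)) * f j i
      + c i * (Δt / Δx) * (S (j + s i) *ᵥ g (j + s i)) i := by
    rintro j (k | k)
    · simpa [c, s, mul_div_assoc] using hupdpos j k
    · simpa [c, s, mul_div_assoc] using hupdneg (j + 1) k
  have hgf : ∀ j l, g j l = f (j + t l) l := by
    rintro j (k | k) <;> simp [hg, t, sub_eq_add_neg]
  refine ⟨fun hf => update_nonneg (flux := fun j => S j *ᵥ g j) (fun i => ?_) (fun i => ?_) hf
    (fun j i => ?_) hupd, fun hsum => ?_⟩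
  · rcases i with k | k <;> exact mul_nonneg (abs_nonneg _) (div_pos hΔt hΔx).le
  · rcases i with k | k <;> simpa [c, ← mul_div_assoc, div_le_one hΔx] using hCFL k
  · simp only [mulVec, dotProduct, hgf]
    exact sum_nonneg fun l _ => mul_nonneg (hSnonneg _ _ _) (hf _ _)
  · have hgsum : ∀ l, Summable (g · l) := fun l => by
      simp only [hgf]
      exact (Equiv.addRight (t l)).summable_iff.2 (hsum l)
    have hflux := summable_mulVec_of_leftStochastic_conj hstoch hgsum
    have hbal : ∑ i, γ i * ∑' j, (S j *ᵥ g j) i = ∑ i, γ i * ∑' j, f j i := by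
      refine (hasSum_sum fun i _ => (hflux i).hasSum.mul_left (γ i)).unique ?_
      simp only [sum_mul_mulVec_of_leftStochastic_conj (hstoch _), hgf]
      exact hasSum_sum_comp_add (fun i => (hsum i).hasSum.mul_left (γ i)) _
    have hγwc : ∀ i, γ i = Sum.elim ω ω i * c i := by
      rintro (k | k) <;> simp [hγ, c]
    simp only [hγwc] at hbal
    exact (hasSum_weighted_update (fun i => (hsum i).hasSum) (fun i => (hflux i).hasSum) hbal
      hupd).tsum_eq.trans (hasSum_sum fun i _ => (hsum i).hasSum.mul_left _).tsum_eq.symm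

/-- The one-step well-balanced update of the kinetic scheme preserves nonnegativity
under the CFL condition, and conserves the total discrete mass, provided every
conjugated scattering matrix `Γ S_{j-1/2} Γ⁻¹` is left-stochastic.

Velocities are indexed by `Fin K ⊕ Fin K`: `Sum.inl k` stands for the positive
velocity `v k`, `Sum.inr k` for its opposite `-v k`; weights are symmetric. -/
theorem wellBalanced_scheme_positivity_and_mass_conservation
    (K : ℕ) (hK : 1 ≤ K)
    (v ω : Fin K → ℝ)
    (hv : ∀ k, 0 < v k) (hvmono : StrictMono v)
    (hω : ∀ k, 0 < ω k)
    (hωsum : ∑ i : Fin K ⊕ Fin K, Sum.elim ω ω i = 1)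
    (γ : Fin K ⊕ Fin K → ℝ)
    (hγ : γ = Sum.elim (fun k => ω k * |v k|) (fun k => ω k * |v k|))
    (Δx Δt : ℝ) (hΔx : 0 < Δx) (hΔt : 0 < Δt)
    (S : ℤ → Matrix (Fin K ⊕ Fin K) (Fin K ⊕ Fin K) ℝ)
    (hSnonneg : ∀ j i l, 0 ≤ S j i l)
    (f fnew g : ℤ → (Fin K ⊕ Fin K) → ℝ)
    -- incoming states at the interface `x_{j-1/2}`
    (hg : ∀ j, g j =
      Sum.elim (fun k => f (j - 1) (Sum.inl k)) (fun k => f j (Sum.inr k)))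
    -- update of the positive-velocity components
    (hupdpos : ∀ (j : ℤ) (k : Fin K),
      fnew j (Sum.inl k) =
        (1 - |v k| * Δt / Δx) * f j (Sum.inl k)
          + |v k| * (Δt / Δx) * (S j).mulVec (g j) (Sum.inl k))
    -- update of the negative-velocity components
    (hupdneg : ∀ (j : ℤ) (k : Fin K),
      fnew (j - 1) (Sum.inr k) =
        (1 - |v k| * Δt / Δx) * f (j - 1) (Sum.inr k)
          + |v k| * (Δt / Δx) * (S j).mulVec (g j) (Sum.inr k))
    -- (i) CFL condition : max_k |v_k| · Δt ≤ Δx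
    (hCFL : ∀ k, |v k| * Δt ≤ Δx)
    -- (ii) Γ S_{j-1/2} Γ⁻¹ is left-stochastic
    (hstoch : ∀ j, LeftStochastic
      (Matrix.diagonal γ * S j * Matrix.diagonal fun i => (γ i)⁻¹)) :
    -- (a) preservation of nonnegativity
    ((∀ j i, 0 ≤ f j i) → ∀ j i, 0 ≤ fnew j i) ∧
    -- (b) conservation of the total discrete mass
    ((∀ i, Summable fun j : ℤ => f j i) →
      ∑' j : ℤ, ∑ i, Sum.elim ω ω i * fnew j i
        = ∑' j : ℤ, ∑ i, Sum.elim ω ω i * f j i) :=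
  wellBalanced_scheme_positivity_and_mass_conservation_general K v ω γ hγ Δx Δt hΔx hΔt S hSnonneg f
    fnew g hg hupdpos hupdneg hCFL hstoch
end

section
/- Let K ≥ 1, let v_k (k = ±1,...,±K) be nonzero real velocities, ω_k > 0 weights with ∑_k ω_k = 1, let χ_M, χ_N ≥ 0 and let T : {v_k} → ℝ take values of the form 1 ± χ_M ± χ_N, so that T(v_k) > 0 and |T(v_k) - T(v_ℓ)| ≤ 2(χ_M + χ_N) for all k, ℓ. Let Δx > 0 and define the (2K)×(2K) matrix Q by Q_{kℓ} = δ_{kℓ}( |v_k| + (Δx/2) T(v_k) ) - (Δx/2) ω_ℓ T(v_ℓ). If min_k |v_k| > Δx (χ_M + χ_N), then Q is strictly row diagonally dominant: for every row k, |Q_{kk}| - ∑_{ℓ≠k} |Q_{kℓ}| ≥ min_k |v_k| - Δx (χ_M + χ_N) > 0. -/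
open Finset

/-- The matrix `Q` of the second-order finite-difference discretization of the
stationary kinetic equation is strictly row diagonally dominant under the
non-resonance condition `min_k |v_k| > Δx (χ_M + χ_N)`. -/
theorem Q_strictly_row_diagonally_dominant
    (K : ℕ) (hK : 1 ≤ K)
    (v ω T : Fin (2 * K) → ℝ)
    (hv : ∀ k, v k ≠ 0)
    (hω : ∀ k, 0 < ω k) (hωsum : ∑ k, ω k = 1)
    (χM χN : ℝ) (hχM : 0 ≤ χM) (hχN : 0 ≤ χN)
    (hTform : ∀ k, T k = 1 + χM + χN ∨ T k = 1 + χM - χN ∨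
      T k = 1 - χM + χN ∨ T k = 1 - χM - χN)
    (hTpos : ∀ k, 0 < T k)
    (Δx : ℝ) (hΔx : 0 < Δx)
    (Q : Matrix (Fin (2 * K)) (Fin (2 * K)) ℝ)
    (hQ : ∀ k l, Q k l =
      (if k = l then |v k| + Δx / 2 * T k else 0) - Δx / 2 * ω l * T l)
    (vmin : ℝ)
    (hvmin : vmin = Finset.univ.inf'
      (Finset.univ_nonempty_iff.mpr ⟨⟨0, by omega⟩⟩) fun k => |v k|)
    (hnr : Δx * (χM + χN) < vmin) :
    ∀ k, vmin - Δx * (χM + χN) ≤ |Q k k| - ∑ l ∈ Finset.univ.erase k, |Q k l| ∧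
      0 < vmin - Δx * (χM + χN) := by
  intro k
  have hd : 0 < vmin - Δx * (χM + χN) := by linarith
  refine ⟨?_, hd⟩
  have hωle : ∀ l, ω l ≤ 1 := by
    intro l
    rw [← hωsum]
    exact Finset.single_le_sum (fun i _ => (hω i).le) (Finset.mem_univ l)
  have hTle : ∀ l, T l ≤ T k + 2 * (χM + χN) := by
    intro l
    rcases hTform l with h | h | h | h <;> rcases hTform k with h' | h' | h' | h' <;>
      rw [h, h'] <;> linarith
  -- diagonal entry
  have hQkk : Q k k = |v k| + Δx / 2 * T k * (1 - ω k) := by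
    rw [hQ k k]; simp; ring
  have habsdiag : |Q k k| = Q k k := by
    rw [abs_of_nonneg]
    rw [hQkk]
    have h1 : 0 ≤ Δx / 2 * T k * (1 - ω k) := by
      apply mul_nonneg (mul_nonneg (by linarith) (hTpos k).le)
      linarith [hωle k]
    positivity
  -- off-diagonal
  have hoff : ∀ l ∈ Finset.univ.erase k, |Q k l| = Δx / 2 * ω l * T l := by
    intro l hl
    have hne : k ≠ l := (Finset.ne_of_mem_erase hl).symm
    rw [hQ k l, if_neg hne, zero_sub, abs_neg, abs_of_nonneg]
    exact mul_nonneg (mul_nonneg (by linarith) (hω l).le) (hTpos l).le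
  have hsum : ∑ l ∈ Finset.univ.erase k, |Q k l|
      = (∑ l, Δx / 2 * ω l * T l) - Δx / 2 * ω k * T k := by
    rw [Finset.sum_congr rfl hoff, Finset.sum_erase_eq_sub (Finset.mem_univ k)]
  have hS : ∑ l, Δx / 2 * ω l * T l ≤ Δx / 2 * (T k + 2 * (χM + χN)) := by
    calc ∑ l, Δx / 2 * ω l * T l
        ≤ ∑ l, Δx / 2 * ω l * (T k + 2 * (χM + χN)) := by
          apply Finset.sum_le_sum
          intro i _
          exact mul_le_mul_of_nonneg_left (hTle i)
            (mul_nonneg (by linarith) (hω i).le)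
      _ = Δx / 2 * (T k + 2 * (χM + χN)) := by
          rw [← Finset.sum_mul, ← Finset.mul_sum, hωsum]; ring_nf
  have hvk : vmin ≤ |v k| := by
    rw [hvmin]
    exact Finset.inf'_le _ (Finset.mem_univ k)
  rw [habsdiag, hQkk, hsum]
  nlinarith [hS, hΔx]
end

section
/- Under the hypotheses of the preceding statement (nonzero velocities v_k, positive weights ω_k summing to 1, positive tumbling values T(v_k) of the form 1 ± χ_M ± χ_N, and the non-resonance condition min_k |v_k| > Δx (χ_M + χ_N)), the matrix Q with entries Q_{kℓ} = δ_{kℓ}( |v_k| + (Δx/2) T(v_k) ) - (Δx/2) ω_ℓ T(v_ℓ) is invertible; consequently the scattering matrix S = Q^{-1} Q̃, where Q̃_{kℓ} = δ_{kℓ}( |v_k| - (Δx/2) T(v_k) ) + (Δx/2) ω_ℓ T(v_ℓ), is well defined. -/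
/-!
`Q` is a rank-one perturbation `diagonal d - 1 cᵀ` of a positive diagonal matrix, with
`d k = |v k| + Δx/2 T k` and `c l = Δx/2 ω l T l`. If `Q x = 0` then `d k x k = cᵀ x =: s` for
every `k`, so `s = s ∑ c l / d l`; since `c l / d l < ω l` and `∑ ω l = 1`, this forces `s = 0`
and hence `x = 0`.
-/

open Finset Matrix

theorem Matrix.isUnit_diagonal_sub_vecMulVec_one {n K : Type*} [Fintype n] [DecidableEq n]
    [Field K] (d c : n → K) (hd : ∀ k, d k ≠ 0) (hcd : ∑ l, c l / d l ≠ 1) :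
    IsUnit (diagonal d - vecMulVec (fun _ => 1) c) := by
  rw [isUnit_iff_isUnit_det, isUnit_iff_ne_zero, Ne, ← exists_mulVec_eq_zero_iff]
  rintro ⟨x, hx0, hx⟩
  set s := c ⬝ᵥ x
  have hxk : ∀ k, x k = s / d k := fun k => by
    have := congrFun hx k
    simp only [sub_mulVec, mulVec_diagonal, vecMulVec_mulVec, op_smul_eq_mul, one_mul,
      Pi.sub_apply, Pi.smul_apply, Pi.zero_apply, sub_eq_zero] at this
    rw [eq_div_iff (hd k), mul_comm, this]
  have hs_fixed : s * ∑ l, c l / d l = s := calc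
      s * ∑ l, c l / d l = ∑ l, c l * x l := by
        rw [mul_sum]
        exact sum_congr rfl fun l _ => by rw [hxk l]; ring
      _ = s := rfl
  have hs0 : s = 0 := (mul_right_eq_self₀.mp hs_fixed).resolve_left hcd
  exact hx0 (funext fun k => by rw [hxk k, hs0, zero_div, Pi.zero_apply])

theorem sum_mul_div_add_lt_one {n K : Type*} [Fintype n] [Field K] [LinearOrder K]
    [IsStrictOrderedRing K] (ω a t : n → K) (hω : ∀ l, 0 < ω l) (hωsum : ∑ l, ω l = 1)
    (ha : ∀ l, 0 < a l) (ht : ∀ l, 0 < t l) :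
    ∑ l, ω l * t l / (a l + t l) < 1 := by
  have hne : (univ : Finset n).Nonempty :=
    nonempty_of_sum_ne_zero (hωsum ▸ one_ne_zero : ∑ l, ω l ≠ 0)
  rw [← hωsum]
  refine sum_lt_sum_of_nonempty hne fun l _ => ?_
  rw [div_lt_iff₀ (add_pos (ha l) (ht l))]
  nlinarith [mul_pos (hω l) (ha l)]

/-- Under the non-resonance condition `min_k |v_k| > Δx (χ_M + χ_N)`, the matrix
`Q` of the second-order finite-difference discretization of the stationary
kinetic equation is invertible, so the scattering matrix `S = Q⁻¹ Q̃` is well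
defined (it satisfies `Q S = Q̃`). -/
theorem Q_invertible_scattering_matrix_well_defined
    (K : ℕ)
    (v ω T : Fin (2 * K) → ℝ)
    (hv : ∀ k, v k ≠ 0)
    (hω : ∀ k, 0 < ω k) (hωsum : ∑ k, ω k = 1)
    (hTpos : ∀ k, 0 < T k)
    (Δx : ℝ) (hΔx : 0 < Δx)
    (Q Qt : Matrix (Fin (2 * K)) (Fin (2 * K)) ℝ)
    (hQ : ∀ k l, Q k l =
      (if k = l then |v k| + Δx / 2 * T k else 0) - Δx / 2 * ω l * T l) :
    IsUnit Q ∧ Q * (Q⁻¹ * Qt) = Qt := by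
  have hd : ∀ k, 0 < |v k| + Δx / 2 * T k := fun k =>
    add_pos (abs_pos.mpr (hv k)) (by have := hTpos k; positivity)
  have hQ_eq : Q = diagonal (fun k => |v k| + Δx / 2 * T k) -
      vecMulVec (fun _ => 1) (fun l => Δx / 2 * ω l * T l) := by
    ext k l
    simp only [hQ, Matrix.sub_apply, diagonal_apply, vecMulVec_apply, one_mul]
  have hcd : ∑ l, Δx / 2 * ω l * T l / (|v l| + Δx / 2 * T l) < 1 := by
    refine lt_of_eq_of_lt (sum_congr rfl fun l _ => by ring) (sum_mul_div_add_lt_one ω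
      (fun l => |v l|) (fun l => Δx / 2 * T l) hω hωsum (fun l => abs_pos.mpr (hv l))
      (fun l => by have := hTpos l; positivity))
  have hQ_unit : IsUnit Q := hQ_eq ▸
    isUnit_diagonal_sub_vecMulVec_one _ _ (fun k => (hd k).ne') hcd.ne
  exact ⟨hQ_unit, mul_nonsing_inv_cancel_left Q Qt ((isUnit_iff_isUnit_det Q).mp hQ_unit)⟩
end

section
/- Let η ∈ (-1, 1). The function G : (-1,1) → ℝ defined by G(c) = ∫_{-1}^{1} (v - c) / (1 + η · sgn(v - c)) dv is continuous and strictly decreasing on (-1,1), satisfies G(c) > 0 as c → -1⁺ and G(c) < 0 as c → 1⁻, and therefore has exactly one zero c(η) ∈ (-1, 1). In particular there exists a unique velocity c_* ∈ (-1,1) with ∫_{-1}^{1} (v - c_*)/T_+(v - c_*) dv = 0 for T_+(w) = 1 - (χ_M + χ_N) sgn(w), and a unique velocity c^* ∈ (-1,1) with ∫_{-1}^{1} (v - c^*)/T_-(v - c^*) dv = 0 for T_-(w) = 1 + (χ_M - χ_N) sgn(w), whenever χ_M + χ_N < 1 and |χ_M - χ_N| < 1. -/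
/-!
Splitting the velocity interval at `v = c`, the integrand is `(v - c) / (1 - η)` to the left
and `(v - c) / (1 + η)` to the right, so `G(c) = (1 - c)² / (2(1 + η)) - (1 + c)² / (2(1 - η))`.
For `|η| < 1` this quadratic is strictly decreasing on `[-1, 1]`, positive at `-1` and negative
at `1`, so it has exactly one zero there. The critical speeds are the cases
`η = -(χ_M + χ_N)` and `η = χ_M - χ_N`.
-/

open Filter Set intervalIntegral

noncomputable def driftPolynomial (η a b c : ℝ) : ℝ :=
  (b - c) ^ 2 / (2 * (1 + η)) - (c - a) ^ 2 / (2 * (1 - η))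

theorem continuous_driftPolynomial (η a b : ℝ) : Continuous (driftPolynomial η a b) := by
  unfold driftPolynomial
  fun_prop

theorem driftPolynomial_strictAntiOn {η : ℝ} (hη : η ∈ Ioo (-1) 1) (a b : ℝ) :
    StrictAntiOn (driftPolynomial η a b) (Icc a b) := by
  intro x hx y hy hxy
  have : 0 < 1 + η := by linarith [hη.1]
  have : 0 < 1 - η := by linarith [hη.2]
  unfold driftPolynomial
  gcongr ?_ / _ - ?_ / _
  · exact pow_lt_pow_left₀ (by linarith) (sub_nonneg.2 hy.2) two_ne_zero
  · exact pow_lt_pow_left₀ (by linarith) (sub_nonneg.2 hx.1) two_ne_zero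

theorem driftPolynomial_left_pos {η a b : ℝ} (hη : -1 < η) (hab : a < b) :
    0 < driftPolynomial η a b a := by
  have : 0 < 1 + η := by linarith
  have : 0 < b - a := sub_pos.2 hab
  norm_num [driftPolynomial]
  positivity

theorem driftPolynomial_right_neg {η a b : ℝ} (hη : η < 1) (hab : a < b) :
    driftPolynomial η a b b < 0 := by
  have : 0 < 1 - η := by linarith
  have : 0 < b - a := sub_pos.2 hab
  norm_num [driftPolynomial]
  positivity

theorem intervalIntegral_sub_div (a b c k : ℝ) :
    ∫ v in a..b, (v - c) / k = ((b - c) ^ 2 - (a - c) ^ 2) / (2 * k) := by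
  rw [integral_div, integral_comp_sub_right (fun x => x), integral_id]
  ring

theorem intervalIntegral_sub_div_one_add_mul_sign {η a b c : ℝ} (hac : a ≤ c) (hcb : c ≤ b) :
    ∫ v in a..b, (v - c) / (1 + η * Real.sign (v - c)) = driftPolynomial η a b c := by
  set f := fun v : ℝ => (v - c) / (1 + η * Real.sign (v - c))
  have hleft : EqOn f (fun v => (v - c) / (1 - η)) (uIcc a c) := by
    intro v hv
    rw [uIcc_of_le hac] at hv
    obtain hvc | rfl := hv.2.lt_or_eq
    · simp only [f, Real.sign_of_neg (sub_neg.2 hvc)]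
      ring
    · simp [f]
  have hright : EqOn f (fun v => (v - c) / (1 + η)) (uIcc c b) := by
    intro v hv
    rw [uIcc_of_le hcb] at hv
    obtain hcv | rfl := hv.1.lt_or_eq
    · simp only [f, Real.sign_of_pos (sub_pos.2 hcv)]
      ring
    · simp [f]
  have hcont : ∀ k : ℝ, Continuous fun v : ℝ => (v - c) / k := fun k => by fun_prop
  rw [← integral_add_adjacent_intervals
      ((hcont _).continuousOn.congr hleft).intervalIntegrable
      ((hcont _).continuousOn.congr hright).intervalIntegrable,
    integral_congr hleft, integral_congr hright, intervalIntegral_sub_div,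
    intervalIntegral_sub_div, driftPolynomial]
  ring

theorem existsUnique_intervalIntegral_sub_div_one_add_mul_sign_eq_zero {η a b : ℝ}
    (hη : η ∈ Ioo (-1) 1) (hab : a < b) :
    ∃! c : ℝ, c ∈ Ioo a b ∧ ∫ v in a..b, (v - c) / (1 + η * Real.sign (v - c)) = 0 := by
  have hF : ∀ c ∈ Ioo a b, ∫ v in a..b, (v - c) / (1 + η * Real.sign (v - c)) =
      driftPolynomial η a b c := fun c hc =>
    intervalIntegral_sub_div_one_add_mul_sign hc.1.le hc.2.le
  obtain ⟨c, hc, hc₀⟩ := intermediate_value_Ioo' hab.le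
    (continuous_driftPolynomial η a b).continuousOn
    ⟨driftPolynomial_right_neg hη.2 hab, driftPolynomial_left_pos hη.1 hab⟩
  refine ⟨c, ⟨hc, (hF c hc).trans hc₀⟩, fun d ⟨hd, hd₀⟩ => ?_⟩
  exact (driftPolynomial_strictAntiOn hη a b).injOn (Ioo_subset_Icc_self hd)
    (Ioo_subset_Icc_self hc) (((hF d hd).symm.trans hd₀).trans hc₀.symm)

/-- The drift functional `G(c) = ∫_{-1}^1 (v-c)/(1 + η sgn(v-c)) dv` is
continuous and strictly decreasing on `(-1,1)`, positive near `-1`, negative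
near `1`, and hence has a unique zero in `(-1,1)`.  In particular the critical
speeds `c_*` (for `T₊(w) = 1 - (χ_M + χ_N) sgn w`) and `c^*` (for
`T₋(w) = 1 + (χ_M - χ_N) sgn w`) exist and are unique whenever
`χ_M + χ_N < 1` and `|χ_M - χ_N| < 1`. -/
theorem drift_functional_unique_zero
    (η : ℝ) (hη : η ∈ Set.Ioo (-1 : ℝ) 1)
    (χM χN : ℝ) (hχM : 0 ≤ χM) (hχN : 0 ≤ χN)
    (hsum : χM + χN < 1) (hdiff : |χM - χN| < 1)
    (G : ℝ → ℝ)
    (hG : ∀ c, G c = ∫ v in (-1 : ℝ)..1, (v - c) / (1 + η * Real.sign (v - c))) :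
    ContinuousOn G (Set.Ioo (-1 : ℝ) 1) ∧
    StrictAntiOn G (Set.Ioo (-1 : ℝ) 1) ∧
    (∀ᶠ c in nhdsWithin (-1 : ℝ) (Set.Ioi (-1 : ℝ)), 0 < G c) ∧
    (∀ᶠ c in nhdsWithin (1 : ℝ) (Set.Iio (1 : ℝ)), G c < 0) ∧
    (∃! c : ℝ, c ∈ Set.Ioo (-1 : ℝ) 1 ∧ G c = 0) ∧
    (∃! cs : ℝ, cs ∈ Set.Ioo (-1 : ℝ) 1 ∧
      ∫ v in (-1 : ℝ)..1,
        (v - cs) / (1 - (χM + χN) * Real.sign (v - cs)) = 0) ∧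
    (∃! cS : ℝ, cS ∈ Set.Ioo (-1 : ℝ) 1 ∧
      ∫ v in (-1 : ℝ)..1,
        (v - cS) / (1 + (χM - χN) * Real.sign (v - cS)) = 0) := by
  have h₁ : (-1 : ℝ) < 1 := by norm_num
  set F := driftPolynomial η (-1) 1
  have hGF : EqOn G F (Ioo (-1) 1) := fun c hc =>
    (hG c).trans (intervalIntegral_sub_div_one_add_mul_sign hc.1.le hc.2.le)
  have hF : Continuous F := continuous_driftPolynomial η (-1) 1
  refine ⟨hF.continuousOn.congr hGF, fun x hx y hy hxy => ?_, ?_, ?_, ?_, ?_, ?_⟩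
  · rw [hGF hx, hGF hy]
    exact driftPolynomial_strictAntiOn hη _ _ (Ioo_subset_Icc_self hx)
      (Ioo_subset_Icc_self hy) hxy
  · filter_upwards [Ioo_mem_nhdsGT h₁,
      ((hF.tendsto _).mono_left nhdsWithin_le_nhds).eventually_const_lt
        (driftPolynomial_left_pos hη.1 h₁)] with c hc hFc
    rwa [hGF hc]
  · filter_upwards [Ioo_mem_nhdsLT h₁,
      ((hF.tendsto _).mono_left nhdsWithin_le_nhds).eventually_lt_const
        (driftPolynomial_right_neg hη.2 h₁)] with c hc hFc
    rwa [hGF hc]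
  · simpa only [← hG] using
      existsUnique_intervalIntegral_sub_div_one_add_mul_sign_eq_zero hη h₁
  · simpa only [neg_mul, ← sub_eq_add_neg] using
      existsUnique_intervalIntegral_sub_div_one_add_mul_sign_eq_zero (η := -(χM + χN))
        ⟨by linarith, by linarith⟩ h₁
  · exact existsUnique_intervalIntegral_sub_div_one_add_mul_sign_eq_zero (η := χM - χN)
      (abs_lt.mp hdiff) h₁
end

section
/- Let η ∈ (0, 1) and let c ∈ (-1, 1) satisfy ∫_{-1}^{1} (v - c)/(1 - η · sgn(v - c)) dv < 0 (which holds exactly when c > c_*, the unique zero of this integral as a function of c). For λ ∈ [0, (1-η)/(1-c)), define g(λ) = ∫_{-1}^{1} (v - c) / ( 1 - η · sgn(v - c) - λ (v - c) ) dv; the denominator is strictly positive for all v ∈ (-1,1), v ≠ c, in this range of λ. Then g(0) < 0 and g(λ) → +∞ as λ → ((1-η)/(1-c))⁻, and consequently there exists a smallest λ_+ ∈ (0, (1-η)/(1-c)) with g(λ_+) = 0. -/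
open Filter Topology MeasureTheory Set

/-!
For `0 ≤ λ < (1 - η) / (1 - c)` the denominator is at least `(1 - η) - λ (1 - c) > 0` uniformly
in `v`, so dominated convergence makes `g` continuous on `[0, (1 - η) / (1 - c))`. Behind the
front (`v ≤ c`) the integrand is bounded below by `-(1 + c)`; ahead of it, writing
`w = v - c` and `A = 1 - η`, the integral is explicit,
`∫₀^{1-c} w / (A - λ w) dw = -(1 - c) / λ + A / λ² · log (A / (A - λ (1 - c)))`,
which tends to `+∞` as `λ → ((1 - η) / (1 - c))⁻`. As `g 0 < 0`, the intermediate value theorem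
produces a zero, and a least one exists by compactness.
-/

namespace Real

@[fun_prop]
lemma measurable_sign : Measurable Real.sign :=
  Measurable.ite measurableSet_Iio measurable_const
    (Measurable.ite measurableSet_Ioi measurable_const measurable_const)

lemma sign_le_one (r : ℝ) : sign r ≤ 1 := by
  unfold sign; split_ifs <;> norm_num

lemma sign_nonpos {r : ℝ} (hr : r ≤ 0) : sign r ≤ 0 := by
  unfold sign; split_ifs <;> linarith

end Real

lemma sub_mul_pos_iff_lt_div {a b x : ℝ} (hb : 0 < b) : 0 < a - x * b ↔ x < a / b := by
  rw [lt_div_iff₀ hb, sub_pos]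

section LogPrimitive

variable {A l : ℝ}

lemma hasDerivAt_primitive_id_div_sub_mul (hl : l ≠ 0) {w : ℝ} (hw : 0 < A - l * w) :
    HasDerivAt (fun w => -(w / l) - A / l ^ 2 * Real.log (A - l * w)) (w / (A - l * w)) w := by
  have hlin : HasDerivAt (fun w => A - l * w) (-l) w := by
    simpa using ((hasDerivAt_id w).const_mul l).const_sub A
  refine (((hasDerivAt_id w).div_const l).neg.sub
    ((hlin.log hw.ne').const_mul (A / l ^ 2))).congr_deriv ?_
  field_simp
  ring

theorem integral_id_div_sub_mul (hl : 0 < l) {b : ℝ} (hb : 0 ≤ b) (hAb : 0 < A - l * b) :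
    ∫ w in (0 : ℝ)..b, w / (A - l * w) =
      -(b / l) + A / l ^ 2 * (Real.log A - Real.log (A - l * b)) := by
  have hpos : ∀ w ∈ uIcc 0 b, 0 < A - l * w := fun w hw => by
    rw [uIcc_of_le hb] at hw
    nlinarith [hw.2]
  rw [intervalIntegral.integral_eq_sub_of_hasDerivAt
    (fun w hw => hasDerivAt_primitive_id_div_sub_mul hl.ne' (hpos w hw))
    (continuousOn_id.div (by fun_prop) fun w hw => (hpos w hw).ne').intervalIntegrable]
  simp only [mul_zero, sub_zero, zero_div, neg_zero]
  ring

theorem tendsto_integral_id_div_sub_mul_atTop (hA : 0 < A) {b : ℝ} (hb : 0 < b) :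
    Tendsto (fun l => ∫ w in (0 : ℝ)..b, w / (A - l * w)) (𝓝[<] (A / b)) atTop := by
  have hAb : 0 < A / b := div_pos hA hb
  have hgap : Tendsto (fun l => A - l * b) (𝓝[<] (A / b)) (𝓝[>] 0) := by
    refine tendsto_nhdsWithin_iff.mpr ⟨?_, ?_⟩
    · exact ((by fun_prop : Continuous fun l => A - l * b).tendsto' (A / b) 0
        (by simp [div_mul_cancel₀ A hb.ne'])).mono_left nhdsWithin_le_nhds
    · filter_upwards [self_mem_nhdsWithin] with l hl
      exact (sub_mul_pos_iff_lt_div hb).mpr hl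
  have hlog : Tendsto (fun l => Real.log A - Real.log (A - l * b)) (𝓝[<] (A / b)) atTop :=
    tendsto_atTop_add_const_left _ _
      (tendsto_neg_atBot_atTop.comp (Real.tendsto_log_nhdsGT_zero.comp hgap))
  have hcoef : Tendsto (fun l => A / l ^ 2) (𝓝[<] (A / b)) (𝓝 (A / (A / b) ^ 2)) :=
    ((continuousAt_const.div (continuousAt_id.pow 2) (pow_ne_zero 2 hAb.ne')).tendsto).mono_left
      nhdsWithin_le_nhds
  have hfirst : Tendsto (fun l => -(b / l)) (𝓝[<] (A / b)) (𝓝 (-(b / (A / b)))) :=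
    ((continuousAt_const.div continuousAt_id hAb.ne').neg.tendsto).mono_left nhdsWithin_le_nhds
  refine (hfirst.add_atTop (hcoef.pos_mul_atTop (div_pos hA (pow_pos hAb 2)) hlog)).congr' ?_
  filter_upwards [Ioo_mem_nhdsLT hAb] with l hl
  exact (integral_id_div_sub_mul hl.1 hb.le ((sub_mul_pos_iff_lt_div hb).mpr hl.2)).symm

end LogPrimitive

noncomputable def dispersion (η c lam : ℝ) : ℝ :=
  ∫ v in (-1 : ℝ)..1, (v - c) / (1 - η * Real.sign (v - c) - lam * (v - c))

section Dispersion

variable {η c lam v : ℝ}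

lemma sub_mul_le_tumble_denom (hη : 0 ≤ η) (hlam : 0 ≤ lam) (hv : v ≤ 1) :
    1 - η - lam * (1 - c) ≤ 1 - η * Real.sign (v - c) - lam * (v - c) := by
  have hsign := mul_le_of_le_one_right hη (Real.sign_le_one (v - c))
  have hdrift := mul_le_mul_of_nonneg_left (by linarith : v - c ≤ 1 - c) hlam
  linarith

lemma tumble_denom_pos (hη : 0 ≤ η) (hc : c < 1) (hlam : lam ∈ Ico 0 ((1 - η) / (1 - c)))
    (hv : v ≤ 1) : 0 < 1 - η * Real.sign (v - c) - lam * (v - c) :=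
  ((sub_mul_pos_iff_lt_div (sub_pos.mpr hc)).mpr hlam.2).trans_le
    (sub_mul_le_tumble_denom hη hlam.1 hv)

lemma abs_dispersion_integrand_le (hη : 0 ≤ η) (hc : c ∈ Icc (-1) 1) (hlam : 0 ≤ lam) {m : ℝ}
    (hm : 0 < m) (hm_le : m ≤ 1 - η - lam * (1 - c)) (hv : v ∈ Icc (-1) 1) :
    |(v - c) / (1 - η * Real.sign (v - c) - lam * (v - c))| ≤ 2 / m := by
  have hD := hm_le.trans (sub_mul_le_tumble_denom hη hlam hv.2)
  rw [abs_div, abs_of_pos (hm.trans_le hD)]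
  gcongr
  exact abs_le.mpr ⟨by linarith [hv.1, hc.2], by linarith [hv.2, hc.1]⟩

lemma measurable_dispersion_integrand (η c lam : ℝ) :
    Measurable fun v => (v - c) / (1 - η * Real.sign (v - c) - lam * (v - c)) := by
  fun_prop

lemma intervalIntegrable_dispersion_integrand (hη : 0 ≤ η) (hc : c ∈ Ico (-1) 1)
    (hlam : lam ∈ Ico 0 ((1 - η) / (1 - c))) :
    IntervalIntegrable (fun v => (v - c) / (1 - η * Real.sign (v - c) - lam * (v - c)))
      volume (-1) 1 := by
  have hm := (sub_mul_pos_iff_lt_div (sub_pos.mpr hc.2)).mpr hlam.2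
  rw [intervalIntegrable_iff_integrableOn_Icc_of_le (by norm_num)]
  refine Measure.integrableOn_of_bounded measure_Icc_lt_top.ne
    (measurable_dispersion_integrand η c lam).aestronglyMeasurable
    (M := 2 / (1 - η - lam * (1 - c))) ?_
  filter_upwards [ae_restrict_mem measurableSet_Icc] with v hv
  exact abs_dispersion_integrand_le hη (Ico_subset_Icc_self hc) hlam.1 hm le_rfl hv

theorem continuousOn_dispersion (hη : 0 ≤ η) (hc : c ∈ Ico (-1) 1) :
    ContinuousOn (dispersion η c) (Ico 0 ((1 - η) / (1 - c))) := by
  intro lam₀ hlam₀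
  obtain ⟨L', hlam₀L', hL'⟩ := exists_between hlam₀.2
  have hm := (sub_mul_pos_iff_lt_div (sub_pos.mpr hc.2)).mpr hL'
  have hI : uIoc (-1 : ℝ) 1 = Ioc (-1) 1 := uIoc_of_le (by norm_num)
  refine intervalIntegral.continuousWithinAt_of_dominated_interval
    (bound := fun _ => 2 / (1 - η - L' * (1 - c)))
    (Eventually.of_forall fun lam => (measurable_dispersion_integrand η c lam).aestronglyMeasurable)
    ?_ intervalIntegrable_const (ae_of_all _ fun v hv => ?_)
  · have hnear : Iio L' ∈ 𝓝[Ico 0 ((1 - η) / (1 - c))] lam₀ :=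
      mem_nhdsWithin_of_mem_nhds (Iio_mem_nhds hlam₀L')
    filter_upwards [self_mem_nhdsWithin, hnear] with lam hlam hlamL'
    refine ae_of_all _ fun v hv => abs_dispersion_integrand_le hη (Ico_subset_Icc_self hc) hlam.1
      hm ?_ (Ioc_subset_Icc_self (hI ▸ hv))
    nlinarith [hc.2, mem_Iio.mp hlamL']
  · refine (continuousAt_const.div (by fun_prop) ?_).continuousWithinAt
    exact (tumble_denom_pos hη hc.2 hlam₀ (hI ▸ hv).2).ne'

lemma dispersion_ge (hη : 0 ≤ η) (hc : c ∈ Ico (-1) 1) (hlam : lam ∈ Ico 0 ((1 - η) / (1 - c))) :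
    -(1 + c) ^ 2 + ∫ w in (0 : ℝ)..1 - c, w / (1 - η - lam * w) ≤ dispersion η c lam := by
  have hint := intervalIntegrable_dispersion_integrand hη hc hlam
  have hcI : c ∈ uIcc (-1 : ℝ) 1 := by
    rw [uIcc_of_le (by norm_num)]
    exact Ico_subset_Icc_self hc
  have hbehind_int := hint.mono_set (uIcc_subset_uIcc_left hcI)
  have hahead_int := hint.mono_set (uIcc_subset_uIcc_right hcI)
  have hbehind : -(1 + c) ^ 2 ≤
      ∫ v in (-1 : ℝ)..c, (v - c) / (1 - η * Real.sign (v - c) - lam * (v - c)) := by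
    have := intervalIntegral.integral_mono_on hc.1 (intervalIntegrable_const (c := -(1 + c)))
      hbehind_int fun v hv => by
        have hD : 1 ≤ 1 - η * Real.sign (v - c) - lam * (v - c) := by
          nlinarith [mul_nonneg hη (neg_nonneg.mpr (Real.sign_nonpos (sub_nonpos.mpr hv.2))),
            mul_nonneg hlam.1 (sub_nonneg.mpr hv.2)]
        rw [le_div_iff₀ (by linarith)]
        nlinarith [hv.1, hv.2]
    rw [intervalIntegral.integral_const, smul_eq_mul] at this
    linarith
  have hahead : ∫ v in c..1, (v - c) / (1 - η * Real.sign (v - c) - lam * (v - c)) =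
      ∫ w in (0 : ℝ)..1 - c, w / (1 - η - lam * w) := by
    rw [← sub_self c, ← intervalIntegral.integral_comp_sub_right]
    refine intervalIntegral.integral_congr fun v hv => ?_
    rcases (uIcc_of_le hc.2.le ▸ hv).1.eq_or_lt with rfl | hcv
    · simp
    · simp [Real.sign_of_pos (sub_pos.mpr hcv)]
  rw [dispersion, ← intervalIntegral.integral_add_adjacent_intervals hbehind_int hahead_int,
    hahead]
  linarith

theorem tendsto_dispersion_atTop (hη : η ∈ Ico 0 1) (hc : c ∈ Ico (-1) 1) :
    Tendsto (dispersion η c) (𝓝[<] ((1 - η) / (1 - c))) atTop := by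
  have hL : 0 < (1 - η) / (1 - c) := div_pos (sub_pos.mpr hη.2) (sub_pos.mpr hc.2)
  refine tendsto_atTop_mono' _ ?_ (tendsto_atTop_add_const_left _ (-(1 + c) ^ 2)
    (tendsto_integral_id_div_sub_mul_atTop (sub_pos.mpr hη.2) (sub_pos.mpr hc.2)))
  filter_upwards [Ioo_mem_nhdsLT hL] with lam hlam
  exact dispersion_ge hη.1 hc (Ioo_subset_Ico_self hlam)

end Dispersion

/-- The zero set inside `[a, b]`, for some `b` with `g b > 0`, is compact and nonempty; its least
element lies below every zero beyond `b` as well. -/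
theorem exists_first_zero_of_neg_of_tendsto_atTop {g : ℝ → ℝ} {a L : ℝ} (haL : a < L)
    (hg : ContinuousOn g (Ico a L)) (ha : g a < 0) (hL : Tendsto g (𝓝[<] L) atTop) :
    ∃ m ∈ Ioo a L, g m = 0 ∧ ∀ μ ∈ Ioo a L, g μ = 0 → m ≤ μ := by
  obtain ⟨b, hgb, hb⟩ := ((hL.eventually_gt_atTop 0).and (Ioo_mem_nhdsLT haL)).exists
  have hgab : ContinuousOn g (Icc a b) := hg.mono (Icc_subset_Ico_right hb.2)
  have hcompact : IsCompact (Icc a b ∩ g ⁻¹' {0}) :=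
    isCompact_Icc.of_isClosed_subset
      (hgab.preimage_isClosed_of_isClosed isClosed_Icc isClosed_singleton) inter_subset_left
  have hnonempty : (Icc a b ∩ g ⁻¹' {0}).Nonempty := by
    obtain ⟨z, hz, hz0⟩ := intermediate_value_Icc hb.1.le hgab ⟨ha.le, hgb.le⟩
    exact ⟨z, hz, hz0⟩
  obtain ⟨m, ⟨hm, hm0⟩, hleast⟩ := hcompact.exists_isLeast hnonempty
  have ham : a < m := hm.1.lt_of_ne (by rintro rfl; linarith [show g a = 0 from hm0])
  refine ⟨m, ⟨ham, hm.2.trans_lt hb.2⟩, hm0, fun μ hμ hμ0 => ?_⟩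
  rcases le_or_gt μ b with hμb | hbμ
  · exact hleast ⟨⟨hμ.1.le, hμb⟩, hμ0⟩
  · exact hm.2.trans hbμ.le

/-- Existence of the decay exponent `λ₊` ahead of the front: if
`∫_{-1}^1 (v-c)/(1 - η sgn(v-c)) dv < 0` (i.e. `c > c_*`), then the function
`g(λ) = ∫_{-1}^1 (v-c)/(1 - η sgn(v-c) - λ(v-c)) dv`, whose denominator stays
positive for `λ ∈ [0, (1-η)/(1-c))`, satisfies `g(0) < 0`, blows up to `+∞` as
`λ → ((1-η)/(1-c))⁻`, and admits a smallest zero `λ₊ ∈ (0, (1-η)/(1-c))`. -/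
theorem decay_exponent_exists_ahead_of_front
    (η c : ℝ) (hη : η ∈ Set.Ioo (0 : ℝ) 1) (hc : c ∈ Set.Ioo (-1 : ℝ) 1)
    (hflux : ∫ v in (-1 : ℝ)..1, (v - c) / (1 - η * Real.sign (v - c)) < 0)
    (g : ℝ → ℝ)
    (hg : ∀ lam, g lam =
      ∫ v in (-1 : ℝ)..1,
        (v - c) / (1 - η * Real.sign (v - c) - lam * (v - c))) :
    (∀ lam ∈ Set.Ico (0 : ℝ) ((1 - η) / (1 - c)),
      ∀ v ∈ Set.Ioo (-1 : ℝ) 1, v ≠ c →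
        0 < 1 - η * Real.sign (v - c) - lam * (v - c)) ∧
    g 0 < 0 ∧
    Tendsto g (nhdsWithin ((1 - η) / (1 - c)) (Set.Iio ((1 - η) / (1 - c))))
      atTop ∧
    ∃ lamp ∈ Set.Ioo (0 : ℝ) ((1 - η) / (1 - c)), g lamp = 0 ∧
      ∀ μ ∈ Set.Ioo (0 : ℝ) ((1 - η) / (1 - c)), g μ = 0 → lamp ≤ μ := by
  have hη' : η ∈ Ico 0 1 := Ioo_subset_Ico_self hη
  have hc' : c ∈ Ico (-1) 1 := Ioo_subset_Ico_self hc
  obtain rfl : g = dispersion η c := funext hg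
  have hg0 : dispersion η c 0 < 0 := by simpa [dispersion] using hflux
  have hlim := tendsto_dispersion_atTop hη' hc'
  refine ⟨fun lam hlam v hv _ => tumble_denom_pos hη'.1 hc.2 hlam hv.2.le, hg0, hlim, ?_⟩
  exact exists_first_zero_of_neg_of_tendsto_atTop
    (div_pos (sub_pos.mpr hη.2) (sub_pos.mpr hc.2)) (continuousOn_dispersion hη'.1 hc') hg0 hlim
end
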